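/- arXiv:1411.3145 — 7 statements merged into one kernel-verified Lean document; each statement's English description precedes it below -/
import Mathlib

section
/- The volume function V(r) = mu(B(S,r)) of a compact set S in R^d is of Kneser type: for all 0 <= a <= b and lambda >= 1, V(lambda b) - V(lambda a) <= lambda^d (V(b) - V(a)). -/
/-!
Let `p` send each point to a nearest point of `S`, and contract every `x` towards `p x` by the
factor `λ⁻¹`. This map divides the distance to `S` by exactly `λ`, so it sends the shell
`B(S, λb) \ B(S, λa)` into `B(S, b) \ B(S, a)`. Since the nearest-point map is monotone
(`⟪x - y, p x - p y⟫ ≥ 0`), the contraction shrinks distances by at most the factor `λ`, i.e. it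
is `λ`-antilipschitz, and hence decreases `d`-dimensional Hausdorff measure, which is a multiple of
Lebesgue measure, by at most the factor `λᵈ`.
-/

open MeasureTheory Metric Set Module
open scoped NNReal ENNReal RealInnerProductSpace

lemma Metric.mem_cthickening_iff_infDist_le {α : Type*} [PseudoMetricSpace α] {S : Set α}
    (hS : S.Nonempty) {δ : ℝ} (hδ : 0 ≤ δ) {x : α} :
    x ∈ cthickening δ S ↔ infDist x S ≤ δ :=
  ENNReal.le_ofReal_iff_toReal_le (infEDist_ne_top hS) hδ

lemma AntilipschitzWith.volume_le_mul_volume_image {V : Type*} [NormedAddCommGroup V]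
    [InnerProductSpace ℝ V] [FiniteDimensional ℝ V] [MeasurableSpace V] [BorelSpace V]
    {K : ℝ≥0} {f : V → V} (hf : AntilipschitzWith K f) (s : Set V) :
    volume s ≤ (K : ℝ≥0∞) ^ finrank ℝ V * volume (f '' s) := by
  have h := hf.le_hausdorffMeasure_image (d := finrank ℝ V) (Nat.cast_nonneg _) s
  rw [ENNReal.rpow_natCast] at h
  rw [← InnerProductSpace.euclideanHausdorffMeasure_eq_volume,
    Measure.euclideanHausdorffMeasure_def, Measure.smul_apply, Measure.smul_apply,
    ENNReal.smul_def, ENNReal.smul_def, smul_eq_mul, smul_eq_mul, mul_left_comm]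
  gcongr

def IsNearestPointMap {α : Type*} [PseudoMetricSpace α] (S : Set α) (p : α → α) : Prop :=
  ∀ x, p x ∈ S ∧ dist x (p x) = infDist x S

lemma IsClosed.exists_isNearestPointMap {α : Type*} [PseudoMetricSpace α] [ProperSpace α]
    {S : Set α} (hS : IsClosed S) (hne : S.Nonempty) : ∃ p, IsNearestPointMap S p := by
  choose p hpS hpd using hS.exists_infDist_eq_dist hne
  exact ⟨p, fun x => ⟨hpS x, (hpd x).symm⟩⟩

def contractToward {V : Type*} [AddCommGroup V] [Module ℝ V] (p : V → V) (t : ℝ) (x : V) : V :=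
  p x + t • (x - p x)

namespace IsNearestPointMap

section Normed

variable {V : Type*} [NormedAddCommGroup V] [NormedSpace ℝ V] {S : Set V} {p : V → V}

lemma infDist_contractToward (hp : IsNearestPointMap S p) {t : ℝ} (ht0 : 0 ≤ t) (ht1 : t ≤ 1)
    (x : V) : infDist (contractToward p t x) S = t * infDist x S := by
  have hnorm : ∀ s : ℝ, 0 ≤ s → ‖s • (x - p x)‖ = s * infDist x S := fun s hs => by
    rw [norm_smul, Real.norm_of_nonneg hs, ← dist_eq_norm, (hp x).2]
  have hle : infDist (contractToward p t x) S ≤ t * infDist x S :=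
    calc infDist (contractToward p t x) S ≤ dist (contractToward p t x) (p x) :=
          infDist_le_dist_of_mem (hp x).1
      _ = t * infDist x S := by
          rw [dist_eq_norm, contractToward, add_sub_cancel_left, hnorm t ht0]
  have hge : infDist x S ≤ infDist (contractToward p t x) S + (1 - t) * infDist x S :=
    calc infDist x S ≤ infDist (contractToward p t x) S + dist x (contractToward p t x) :=
          infDist_le_infDist_add_dist
      _ = infDist (contractToward p t x) S + (1 - t) * infDist x S := by
          rw [dist_eq_norm, ← hnorm (1 - t) (sub_nonneg.2 ht1), contractToward]
          congr 2
          simp only [sub_smul, one_smul]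
          abel
  linarith

lemma mapsTo_contractToward_cthickening_sdiff (hp : IsNearestPointMap S p) {a b lam : ℝ}
    (ha : 0 ≤ a) (hab : a ≤ b) (hlam : 1 ≤ lam) :
    MapsTo (contractToward p lam⁻¹) (cthickening (lam * b) S \ cthickening (lam * a) S)
      (cthickening b S \ cthickening a S) := by
  have hlam0 : 0 < lam := one_pos.trans_le hlam
  have hb : 0 ≤ b := ha.trans hab
  have hS : S.Nonempty := ⟨p 0, (hp 0).1⟩
  rintro x ⟨hxb, hxa⟩
  rw [mem_cthickening_iff_infDist_le hS (by positivity)] at hxb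
  rw [mem_cthickening_iff_infDist_le hS (by positivity), not_le] at hxa
  rw [mem_sdiff, mem_cthickening_iff_infDist_le hS hb,
    mem_cthickening_iff_infDist_le hS ha, not_le,
    hp.infDist_contractToward (by positivity) (inv_le_one_of_one_le₀ hlam),
    inv_mul_le_iff₀ hlam0, lt_inv_mul_iff₀ hlam0]
  exact ⟨hxb, hxa⟩

end Normed

section Inner

variable {V : Type*} [NormedAddCommGroup V] [InnerProductSpace ℝ V] {S : Set V} {p : V → V}

lemma real_inner_sub_nonneg (hp : IsNearestPointMap S p) (x y : V) :
    0 ≤ ⟪x - y, p x - p y⟫ := by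
  have hx : ‖x - p x‖ ^ 2 ≤ ‖x - p y‖ ^ 2 := by
    gcongr
    rw [← dist_eq_norm, ← dist_eq_norm, (hp x).2]
    exact infDist_le_dist_of_mem (hp y).1
  have hy : ‖y - p y‖ ^ 2 ≤ ‖y - p x‖ ^ 2 := by
    gcongr
    rw [← dist_eq_norm, ← dist_eq_norm, (hp y).2]
    exact infDist_le_dist_of_mem (hp x).1
  simp only [norm_sub_sq_real, inner_sub_left, inner_sub_right] at hx hy ⊢
  linarith [real_inner_comm x (p y), real_inner_comm y (p x), real_inner_comm (p x) (p y)]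

lemma mul_dist_le_dist_contractToward (hp : IsNearestPointMap S p) {t : ℝ} (ht0 : 0 ≤ t)
    (ht1 : t ≤ 1) (x y : V) :
    t * dist x y ≤ dist (contractToward p t x) (contractToward p t y) := by
  set u := x - y
  set v := p x - p y
  have hsplit : contractToward p t x - contractToward p t y = t • u + (1 - t) • v := by
    simp only [contractToward, u, v, smul_sub, sub_smul, one_smul]
    abel
  have hsq : (t * ‖u‖) ^ 2 ≤ ‖t • u + (1 - t) • v‖ ^ 2 := by
    rw [norm_add_sq_real, real_inner_smul_left, real_inner_smul_right, norm_smul, norm_smul,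
      Real.norm_of_nonneg ht0, Real.norm_of_nonneg (sub_nonneg.2 ht1)]
    nlinarith [hp.real_inner_sub_nonneg x y, mul_nonneg ht0 (sub_nonneg.2 ht1)]
  rw [dist_eq_norm, dist_eq_norm, hsplit]
  exact le_of_sq_le_sq hsq (norm_nonneg _)

lemma antilipschitzWith_contractToward (hp : IsNearestPointMap S p) {lam : ℝ} (hlam : 1 ≤ lam) :
    AntilipschitzWith lam.toNNReal (contractToward p lam⁻¹) := by
  have hlam0 : 0 < lam := one_pos.trans_le hlam
  refine AntilipschitzWith.of_le_mul_dist fun x y => ?_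
  rw [Real.coe_toNNReal _ hlam0.le]
  calc dist x y = lam * (lam⁻¹ * dist x y) := by field_simp
    _ ≤ lam * dist (contractToward p lam⁻¹ x) (contractToward p lam⁻¹ y) := by
      gcongr
      exact hp.mul_dist_le_dist_contractToward (by positivity) (inv_le_one_of_one_le₀ hlam) x y

end Inner

end IsNearestPointMap

lemma IsClosed.volume_cthickening_mul_sdiff_le {V : Type*} [NormedAddCommGroup V]
    [InnerProductSpace ℝ V] [FiniteDimensional ℝ V] [MeasurableSpace V] [BorelSpace V]
    {S : Set V} (hS : IsClosed S) (hne : S.Nonempty) {a b lam : ℝ} (ha : 0 ≤ a) (hab : a ≤ b)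
    (hlam : 1 ≤ lam) :
    volume (cthickening (lam * b) S \ cthickening (lam * a) S)
      ≤ ENNReal.ofReal lam ^ finrank ℝ V * volume (cthickening b S \ cthickening a S) := by
  obtain ⟨p, hp⟩ := hS.exists_isNearestPointMap hne
  calc volume (cthickening (lam * b) S \ cthickening (lam * a) S)
      ≤ ENNReal.ofReal lam ^ finrank ℝ V
          * volume (contractToward p lam⁻¹ '' (cthickening (lam * b) S \ cthickening (lam * a) S)) :=
        (hp.antilipschitzWith_contractToward hlam).volume_le_mul_volume_image _
    _ ≤ ENNReal.ofReal lam ^ finrank ℝ V * volume (cthickening b S \ cthickening a S) := by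
        gcongr
        exact (hp.mapsTo_contractToward_cthickening_sdiff ha hab hlam).image_subset

/-- The parallel volume function V(r) = μ(B(S,r)) of a nonempty compact S ⊆ ℝᵈ
is of Kneser type: for 0 ≤ a ≤ b and λ ≥ 1,
V(λb) - V(λa) ≤ λᵈ (V(b) - V(a)). -/
theorem stmt_1 {d : ℕ} (S : Set (EuclideanSpace ℝ (Fin d)))
    (hS : IsCompact S) (hSne : S.Nonempty) :
    ∀ a b lam : ℝ, 0 ≤ a → a ≤ b → 1 ≤ lam →
      (volume (cthickening (lam * b) S)).toReal
          - (volume (cthickening (lam * a) S)).toReal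
        ≤ lam ^ d *
          ((volume (cthickening b S)).toReal - (volume (cthickening a S)).toReal) := by
  intro a b lam ha hab hlam
  have hshell : ∀ {r s : ℝ}, r ≤ s →
      (volume (cthickening s S)).toReal - (volume (cthickening r S)).toReal
        = (volume (cthickening s S \ cthickening r S)).toReal := fun hrs =>
    (measureReal_sdiff (cthickening_mono hrs S) isClosed_cthickening.measurableSet
      hS.cthickening.measure_lt_top.ne).symm
  have hshell_ne_top : volume (cthickening b S \ cthickening a S) ≠ ∞ :=
    measure_ne_top_of_subset sdiff_subset hS.cthickening.measure_lt_top.ne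
  have hkey := hS.isClosed.volume_cthickening_mul_sdiff_le hSne ha hab hlam
  rw [finrank_euclideanSpace_fin] at hkey
  rw [hshell (by nlinarith), hshell hab]
  calc _ ≤ (ENNReal.ofReal lam ^ d * volume (cthickening b S \ cthickening a S)).toReal :=
        ENNReal.toReal_mono (by finiteness) hkey
    _ = _ := by
        rw [ENNReal.toReal_mul, ENNReal.toReal_pow, ENNReal.toReal_ofReal (by positivity)]
end

section
/- If S is a compact set in R^2 whose volume function satisfies V(r) = mu(S) + L_0 r + pi r^2 for 0 <= r < R (with L_0 > 0), then the distance D = dist(X,S) from a uniform point X on B(S,R)\setminus S is absolutely continuous with density f(r) = (L_0 + 2 pi r)/(L_0 R + pi R^2) on [0,R). -/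
/-!
The hypothesis pins down `V(r) = μ(cthickening r S)` only for `r < R`, while the uniform law lives
on `cthickening R S`; once `V(R)` is known, the distribution function of `D` on `[0, R)` is
`(V(r) - μ S) / (V(R) - μ S)`, the integral of the stated density. Continuity from below gives
`μ(thickening R S) = lim_{r↑R} V(r)`, so what remains is that the level set `{dist(·, S) = R}` is
null. Sending `x` to the midpoint of `x` and a nearest point of `S` halves the distance to `S`
and, since nearest-point maps are monotone in a Hilbert space, is `2`-antilipschitz; hence the level
set at `R` is null as soon as the one at `R/2` is, and that one is null because `V` is continuous
at `R/2`.
-/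

open Real MeasureTheory Metric Set Filter
open scoped NNReal ENNReal RealInnerProductSpace Topology

theorem AntilipschitzWith.addHaar_preimage_eq_zero {E : Type*} [NormedAddCommGroup E]
    [NormedSpace ℝ E] [FiniteDimensional ℝ E] [MeasurableSpace E] [BorelSpace E]
    (μ : Measure E) [μ.IsAddHaarMeasure] {f : E → E} {K : ℝ≥0} (hf : AntilipschitzWith K f)
    {s : Set E} (hs : μ s = 0) : μ (f ⁻¹' s) = 0 := by
  set d := Module.finrank ℝ E
  have hμH : ∀ t : Set E, μ t = 0 ↔ μH[d] t = 0 := fun t ↦ by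
    have hμHE : μ t = 0 ↔ μHE[d] t = 0 :=
      ⟨fun h ↦ Measure.absolutelyContinuous_isAddHaarMeasure μHE[d] μ h,
        fun h ↦ Measure.absolutelyContinuous_isAddHaarMeasure μ μHE[d] h⟩
    simp [hμHE, Measure.euclideanHausdorffMeasure_def,
      Measure.addHaarScalarFactor_volume_hausdorffMeasure_ne_zero]
  rw [hμH] at hs ⊢
  exact le_antisymm ((hf.hausdorffMeasure_preimage_le d.cast_nonneg s).trans
    (by rw [hs, mul_zero])) zero_le

section InnerProductSpace

variable {E : Type*} [NormedAddCommGroup E] [InnerProductSpace ℝ E]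

theorem inner_sub_sub_nonneg_of_dist_le {x₁ x₂ y₁ y₂ : E} (h₁ : dist x₁ y₁ ≤ dist x₁ y₂)
    (h₂ : dist x₂ y₂ ≤ dist x₂ y₁) : 0 ≤ ⟪x₁ - x₂, y₁ - y₂⟫ := by
  have hpolar : ‖x₁ - y₂‖ ^ 2 - ‖x₁ - y₁‖ ^ 2 + (‖x₂ - y₁‖ ^ 2 - ‖x₂ - y₂‖ ^ 2)
      = 2 * ⟪x₁ - x₂, y₁ - y₂⟫ := by
    simp only [← real_inner_self_eq_norm_sq, inner_sub_left, inner_sub_right, real_inner_comm]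
    ring
  rw [dist_eq_norm, dist_eq_norm] at h₁ h₂
  nlinarith [pow_le_pow_left₀ (norm_nonneg _) h₁ 2, pow_le_pow_left₀ (norm_nonneg _) h₂ 2]

theorem dist_le_two_mul_dist_midpoint {x₁ x₂ y₁ y₂ : E} (h₁ : dist x₁ y₁ ≤ dist x₁ y₂)
    (h₂ : dist x₂ y₂ ≤ dist x₂ y₁) :
    dist x₁ x₂ ≤ 2 * dist (midpoint ℝ x₁ y₁) (midpoint ℝ x₂ y₂) := by
  have hmid : 2 * dist (midpoint ℝ x₁ y₁) (midpoint ℝ x₂ y₂) = ‖(x₁ - x₂) + (y₁ - y₂)‖ := by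
    rw [dist_eq_norm, midpoint_eq_smul_add, midpoint_eq_smul_add, ← smul_sub, norm_smul,
      ← mul_assoc, show (2 : ℝ) * ‖(⅟2 : ℝ)‖ = 1 by norm_num, one_mul]
    congr 1
    abel
  rw [hmid, dist_eq_norm]
  refine le_of_sq_le_sq ?_ (norm_nonneg _)
  rw [norm_add_sq_real]
  nlinarith [inner_sub_sub_nonneg_of_dist_le h₁ h₂, sq_nonneg ‖y₁ - y₂‖]

variable {S : Set E} {p : E → E}

theorem antilipschitzWith_midpoint_of_infDist_eq_dist
    (hp : ∀ x, p x ∈ S ∧ infDist x S = dist x (p x)) :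
    AntilipschitzWith 2 fun x ↦ midpoint ℝ x (p x) := by
  refine AntilipschitzWith.of_le_mul_dist fun x₁ x₂ ↦ ?_
  have h₁ := (hp x₁).2 ▸ infDist_le_dist_of_mem (hp x₂).1
  have h₂ := (hp x₂).2 ▸ infDist_le_dist_of_mem (hp x₁).1
  exact_mod_cast dist_le_two_mul_dist_midpoint h₁ h₂

theorem infDist_midpoint_of_infDist_eq_dist (hp : ∀ x, p x ∈ S ∧ infDist x S = dist x (p x))
    (x : E) : infDist (midpoint ℝ x (p x)) S = infDist x S / 2 := by
  have hright : dist (midpoint ℝ x (p x)) (p x) = infDist x S / 2 := by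
    rw [dist_midpoint_right, (hp x).2]; norm_num; ring
  have hleft : dist x (midpoint ℝ x (p x)) = infDist x S / 2 := by
    rw [dist_left_midpoint, (hp x).2]; norm_num; ring
  refine le_antisymm (hright ▸ infDist_le_dist_of_mem (hp x).1) ?_
  linarith [infDist_le_infDist_add_dist (x := x) (y := midpoint ℝ x (p x)) (s := S)]

end InnerProductSpace

namespace Metric

variable {α : Type*} [PseudoMetricSpace α] {S : Set α} {ρ : ℝ} {x : α}

theorem mem_cthickening_iff_infDist_le_s2 (hne : S.Nonempty) (hρ : 0 ≤ ρ) :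
    x ∈ cthickening ρ S ↔ infDist x S ≤ ρ := by
  rw [mem_cthickening_iff, ← ENNReal.ofReal_toReal (infEDist_ne_top hne),
    ENNReal.ofReal_le_ofReal_iff hρ, infDist]

theorem setOf_infDist_eq_eq_cthickening_sdiff_thickening (hne : S.Nonempty) (hρ : 0 ≤ ρ) :
    {x | infDist x S = ρ} = cthickening ρ S \ thickening ρ S := by
  ext x
  rw [Set.mem_sdiff, mem_cthickening_iff_infDist_le_s2 hne hρ, mem_thickening_iff_infDist_lt hne,
    not_lt, mem_ofPred_eq, le_antisymm_iff]

variable [MeasurableSpace α] (μ : Measure α)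

theorem measure_setOf_infDist_eq_eq_zero_iff [OpensMeasurableSpace α] (hne : S.Nonempty)
    (hρ : 0 ≤ ρ) (hfin : μ (thickening ρ S) ≠ ∞) :
    μ {x | infDist x S = ρ} = 0 ↔ μ (cthickening ρ S) = μ (thickening ρ S) := by
  rw [setOf_infDist_eq_eq_cthickening_sdiff_thickening hne hρ,
    measure_sdiff (thickening_subset_cthickening ρ S)
      isOpen_thickening.measurableSet.nullMeasurableSet hfin, tsub_eq_zero_iff_le]
  exact ⟨fun h ↦ h.antisymm (measure_mono (thickening_subset_cthickening ρ S)), le_of_eq⟩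

theorem measure_thickening_eq_of_tendsto (hne : S.Nonempty) (hρ : 0 < ρ) {a : ℝ≥0∞}
    (h : Tendsto (fun r ↦ μ (cthickening r S)) (𝓝[<] ρ) (𝓝 a)) : μ (thickening ρ S) = a := by
  obtain ⟨u, hu_mono, hu_mem, hu_lim⟩ := exists_seq_strictMono_tendsto' hρ
  have hunion : thickening ρ S = ⋃ n, cthickening (u n) S := by
    refine subset_antisymm (fun x hx ↦ ?_)
      (iUnion_subset fun n ↦ cthickening_subset_thickening' hρ (hu_mem n).2 S)
    obtain ⟨n, hn⟩ := (hu_lim.eventually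
      (eventually_ge_nhds ((mem_thickening_iff_infDist_lt hne).1 hx))).exists
    exact mem_iUnion.2 ⟨n, (mem_cthickening_iff_infDist_le_s2 hne (hu_mem n).1.le).2 hn⟩
  rw [hunion]
  refine tendsto_nhds_unique (tendsto_measure_iUnion_atTop
    fun m n hmn ↦ cthickening_mono (hu_mono.monotone hmn) S) (h.comp ?_)
  exact tendsto_nhdsWithin_iff.2 ⟨hu_lim, .of_forall fun n ↦ (hu_mem n).2⟩

end Metric

theorem integral_add_two_mul_mul_div (a b c r : ℝ) :
    ∫ t in (0 : ℝ)..r, (a + 2 * b * t) / c = (a * r + b * r ^ 2) / c := by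
  have hlin : IntervalIntegrable (fun t : ℝ ↦ 2 * b * t) volume 0 r :=
    (continuous_const.mul continuous_id).intervalIntegrable _ _
  rw [intervalIntegral.integral_div, intervalIntegral.integral_add intervalIntegrable_const hlin,
    intervalIntegral.integral_const, intervalIntegral.integral_const_mul, integral_id]
  simp only [sub_zero, smul_eq_mul]
  ring

namespace IsCompact

variable {E : Type*} [NormedAddCommGroup E] [InnerProductSpace ℝ E] [FiniteDimensional ℝ E]
  [MeasurableSpace E] [BorelSpace E] (μ : Measure E) [μ.IsAddHaarMeasure] {S : Set E}

theorem addHaar_setOf_infDist_eq_eq_zero_of_half (hS : IsCompact S) (hne : S.Nonempty) {ρ : ℝ}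
    (h : μ {x | infDist x S = ρ / 2} = 0) :
    μ {x | infDist x S = ρ} = 0 := by
  choose p hp using hS.exists_infDist_eq_dist hne
  refine measure_mono_null (fun x (hx : infDist x S = ρ) ↦ ?_)
    ((antilipschitzWith_midpoint_of_infDist_eq_dist hp).addHaar_preimage_eq_zero μ h)
  simp [infDist_midpoint_of_infDist_eq_dist hp, hx]

theorem addHaar_cthickening_eq_of_continuous (hS : IsCompact S) (hne : S.Nonempty) {R : ℝ}
    (hR : 0 < R) {V : ℝ → ℝ} (hV : Continuous V)
    (h : ∀ ρ ∈ Ico 0 R, μ (cthickening ρ S) = .ofReal (V ρ)) :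
    μ (cthickening R S) = .ofReal (V R) := by
  have hth : ∀ ρ ∈ Ioc 0 R, μ (thickening ρ S) = .ofReal (V ρ) := fun ρ hρ ↦ by
    refine measure_thickening_eq_of_tendsto μ hne hρ.1 ?_
    refine (ENNReal.tendsto_ofReal (hV.tendsto ρ)).mono_left nhdsWithin_le_nhds |>.congr' ?_
    filter_upwards [Ioo_mem_nhdsLT hρ.1] with t ht
    exact (h t ⟨ht.1.le, ht.2.trans_le hρ.2⟩).symm
  have hfin : ∀ ρ ∈ Ioc 0 R, μ (thickening ρ S) ≠ ∞ := fun ρ hρ ↦ by simp [hth ρ hρ]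
  have hhalf : R / 2 ∈ Ioc 0 R := ⟨half_pos hR, half_le_self hR.le⟩
  have hlevel : μ {x | infDist x S = R} = 0 := by
    refine hS.addHaar_setOf_infDist_eq_eq_zero_of_half μ hne ?_
    rw [measure_setOf_infDist_eq_eq_zero_iff μ hne hhalf.1.le (hfin _ hhalf),
      h _ ⟨hhalf.1.le, half_lt_self hR⟩, hth _ hhalf]
  rw [(measure_setOf_infDist_eq_eq_zero_iff μ hne hR.le (hfin R ⟨hR, le_rfl⟩)).1 hlevel,
    hth R ⟨hR, le_rfl⟩]

end IsCompact

theorem stmt_2_general (S : Set (EuclideanSpace ℝ (Fin 2)))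
    (hS : IsCompact S) (hSne : S.Nonempty) (R L0 : ℝ) (hR : 0 < R) (hL0 : 0 < L0)
    (hvol : ∀ r : ℝ, 0 ≤ r → r < R →
      (volume (cthickening r S)).toReal = (volume S).toReal + L0 * r + π * r ^ 2)
    {Ω : Type*} [MeasurableSpace Ω] (P : Measure Ω)
    (X : Ω → EuclideanSpace ℝ (Fin 2)) (hX : Measurable X)
    (hunif : Measure.map X P
      = (volume (cthickening R S \ S))⁻¹ • volume.restrict (cthickening R S \ S)) :
    ∀ r, 0 ≤ r → r < R →
      (P {ω | infDist (X ω) S ≤ r}).toReal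
        = ∫ t in (0:ℝ)..r, (L0 + 2 * π * t) / (L0 * R + π * R ^ 2) := by
  intro r hr hrR
  set V : ℝ → ℝ := fun ρ ↦ (volume S).toReal + L0 * ρ + π * ρ ^ 2
  have hcthR : volume (cthickening R S) = .ofReal (V R) :=
    hS.addHaar_cthickening_eq_of_continuous volume hSne hR (by fun_prop) fun ρ hρ ↦ by
      rw [← ENNReal.ofReal_toReal hS.cthickening.measure_lt_top.ne, hvol ρ hρ.1 hρ.2]
  have hshell : ∀ ρ ∈ Icc 0 R, volume.real (cthickening ρ S \ S) = L0 * ρ + π * ρ ^ 2 := by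
    rintro ρ ⟨hρ0, hρR⟩
    have hV : volume.real (cthickening ρ S) = V ρ := by
      rcases hρR.lt_or_eq with hlt | rfl
      · exact hvol ρ hρ0 hlt
      · rw [measureReal_def, hcthR, ENNReal.toReal_ofReal (by simp only [V]; positivity)]
    rw [measureReal_sdiff (self_subset_cthickening S) hS.isClosed.measurableSet
      hS.cthickening.measure_lt_top.ne, hV]
    simp only [V, measureReal_def]
    ring
  have hcdf : {ω | infDist (X ω) S ≤ r} = X ⁻¹' cthickening r S := by
    ext ω
    exact (mem_cthickening_iff_infDist_le_s2 hSne hr).symm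
  rw [hcdf, ← Measure.map_apply hX isClosed_cthickening.measurableSet, hunif, Measure.smul_apply,
    Measure.restrict_apply isClosed_cthickening.measurableSet, ← inter_sdiff_assoc,
    inter_eq_left.2 (cthickening_mono hrR.le S), smul_eq_mul, ENNReal.toReal_mul,
    ENNReal.toReal_inv, ← measureReal_def, ← measureReal_def, hshell r ⟨hr, hrR.le⟩,
    hshell R ⟨hR.le, le_rfl⟩, integral_add_two_mul_mul_div, div_eq_inv_mul]

/-- If S ⊆ ℝ² is compact with polynomial parallel volume
V(r) = μ(S) + L₀r + πr² for 0 ≤ r < R, then the distance D = dist(X,S) from a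
uniform point X on B(S,R) \ S is absolutely continuous with density
f(r) = (L₀ + 2πr)/(L₀R + πR²) on [0,R): its CDF is the integral of f. -/
theorem stmt_2 (S : Set (EuclideanSpace ℝ (Fin 2)))
    (hS : IsCompact S) (hSne : S.Nonempty) (R L0 : ℝ) (hR : 0 < R) (hL0 : 0 < L0)
    (hvol : ∀ r : ℝ, 0 ≤ r → r < R →
      (volume (cthickening r S)).toReal = (volume S).toReal + L0 * r + π * r ^ 2)
    {Ω : Type*} [MeasurableSpace Ω] (P : Measure Ω) [IsProbabilityMeasure P]
    (X : Ω → EuclideanSpace ℝ (Fin 2)) (hX : Measurable X)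
    (hunif : Measure.map X P
      = (volume (cthickening R S \ S))⁻¹ • volume.restrict (cthickening R S \ S)) :
    ∀ r, 0 ≤ r → r < R →
      (P {ω | infDist (X ω) S ≤ r}).toReal
        = ∫ t in (0:ℝ)..r, (L0 + 2 * π * t) / (L0 * R + π * R ^ 2) :=
  stmt_2_general S hS hSne R L0 hR hL0 hvol P X hX hunif
end

section
/- For the family of densities f(r;L) = (L + 2 pi r)/(L R + pi R^2) on [0,R], the Fisher information at L = L_0 is I(L_0) = (1/(L_0 + pi R)) [ (1/(2 pi R)) log(1 + 2 pi R / L_0) - 1/(L_0 + pi R) ], and I(L_0) > 0. -/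
/-!
Since `f(r;L) = (L + 2πr) / (R (L + πR))`, the score is `1/(L + 2πr) - 1/(L + πR)`, so with
`u = L₀ + 2πr` the Fisher integrand is `(1/u - 1/c)² u / (R c) = (1/u - 2/c + u/c²) / (R c)`,
`c = L₀ + πR`, which integrates in closed form. Positivity is the inequality
`log (1 + x) > 2x / (x + 2)` at `x = 2πR / L₀`, where `2x / (x + 2) = 2πR / c`.
-/

open Real MeasureTheory Set intervalIntegral

lemma hasDerivAt_log_div_affine {a b R x : ℝ} (ha : x + a ≠ 0) (hb : x * R + b ≠ 0) :
    HasDerivAt (fun L => log ((L + a) / (L * R + b))) (1 / (x + a) - R / (x * R + b)) x := by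
  have hnum : HasDerivAt (fun L => L + a) 1 x := (hasDerivAt_id x).add_const a
  have hden : HasDerivAt (fun L => L * R + b) R x := by
    simpa using ((hasDerivAt_id x).mul_const R).add_const b
  refine ((hnum.div hden hb).log (div_ne_zero ha hb)).congr_deriv ?_
  simp only [Pi.div_apply]
  field_simp

lemma integral_sq_inv_sub_inv_mul {a k c R : ℝ} (ha : 0 < a) (hk : 0 < k) (hR : 0 ≤ R) :
    ∫ r in (0:ℝ)..R, (1 / (a + k * r) - 1 / c) ^ 2 * (a + k * r)
      = log (1 + k * R / a) / k - 2 * R / c + (a * R + k * R ^ 2 / 2) / c ^ 2 := by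
  have hpos : ∀ r ∈ uIcc 0 R, 0 < a + k * r := fun r hr => by
    rw [uIcc_of_le hR] at hr
    have := hr.1
    positivity
  have hderiv : ∀ r ∈ uIcc 0 R, HasDerivAt
      (fun r => log (a + k * r) / k - 2 * r / c + (a * r + k * r ^ 2 / 2) / c ^ 2)
      ((1 / (a + k * r) - 1 / c) ^ 2 * (a + k * r)) r := by
    intro r hr
    have hlin : HasDerivAt (fun r => a + k * r) k r := by
      simpa using ((hasDerivAt_id r).const_mul k).const_add a
    have hquad : HasDerivAt (fun r => a * r + k * r ^ 2 / 2) (a + k * r) r := by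
      refine ((hasDerivAt_id r).const_mul a).add
        ((hasDerivAt_pow 2 r).const_mul k |>.div_const 2) |>.congr_deriv ?_
      push_cast
      ring
    refine (((hlin.log (hpos r hr).ne').div_const k).sub
      (((hasDerivAt_id r).const_mul 2).div_const c)).add (hquad.div_const (c ^ 2)) |>.congr_deriv ?_
    have hu := (hpos r hr).ne'
    field_simp
    ring
  have hcont : ContinuousOn (fun r => (1 / (a + k * r) - 1 / c) ^ 2 * (a + k * r)) (uIcc 0 R) :=
    ((continuousOn_const.div (by fun_prop) fun r hr => (hpos r hr).ne').sub
      continuousOn_const |>.pow 2).mul (by fun_prop)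
  rw [integral_eq_sub_of_hasDerivAt hderiv hcont.intervalIntegrable]
  have hlog : log (a + k * R) - log a = log (1 + k * R / a) := by
    rw [← log_div (by positivity) ha.ne']
    congr 1
    field_simp
  simp only [mul_zero, add_zero, zero_div, sub_zero]
  rw [← hlog]
  ring

/-- For the family f(r;L) = (L + 2πr)/(LR + πR²) on [0,R], the Fisher information
at L₀ is I(L₀) = (1/(L₀+πR))[(1/(2πR)) log(1 + 2πR/L₀) - 1/(L₀+πR)], and I(L₀) > 0. -/
theorem stmt_8 (R L0 : ℝ) (hR : 0 < R) (hL0 : 0 < L0)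
    (f : ℝ → ℝ → ℝ)
    (hf : ∀ r L, f r L = (L + 2 * π * r) / (L * R + π * R ^ 2))
    (I : ℝ)
    (hI : I = ∫ r in (0:ℝ)..R,
        (deriv (fun L => Real.log (f r L)) L0) ^ 2 * f r L0) :
    I = (1 / (L0 + π * R))
        * ((1 / (2 * π * R)) * Real.log (1 + 2 * π * R / L0) - 1 / (L0 + π * R))
    ∧ 0 < I := by
  have hnorm : L0 * R + π * R ^ 2 = R * (L0 + π * R) := by ring
  have hintegrand : EqOn (fun r => (deriv (fun L => log (f r L)) L0) ^ 2 * f r L0)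
      (fun r => 1 / (R * (L0 + π * R)) *
        ((1 / (L0 + 2 * π * r) - 1 / (L0 + π * R)) ^ 2 * (L0 + 2 * π * r))) (uIcc 0 R) := by
    intro r hr
    have hr0 : 0 ≤ r := (uIcc_of_le hR.le ▸ hr).1
    have hscore : deriv (fun L => log (f r L)) L0 = 1 / (L0 + 2 * π * r) - 1 / (L0 + π * R) := by
      simp only [hf]
      rw [(hasDerivAt_log_div_affine (by positivity) (by positivity)).deriv, hnorm]
      field_simp
    simp only [hscore, hf r L0, hnorm]
    field_simp
  have hvalue : I = 1 / (L0 + π * R) *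
      ((1 / (2 * π * R)) * log (1 + 2 * π * R / L0) - 1 / (L0 + π * R)) := by
    rw [hI, integral_congr hintegrand, intervalIntegral.integral_const_mul,
      integral_sq_inv_sub_inv_mul hL0 (by positivity) hR.le]
    field_simp
    ring
  refine ⟨hvalue, hvalue ▸ mul_pos (by positivity) (sub_pos.mpr ?_)⟩
  calc 1 / (L0 + π * R) = 1 / (2 * π * R) * (2 * (2 * π * R / L0) / (2 * π * R / L0 + 2)) := by
        field_simp
        ring
    _ < 1 / (2 * π * R) * log (1 + 2 * π * R / L0) := by
        gcongr
        exact lt_log_one_add_of_pos (by positivity)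
end

section
/- With u = E(D) and v = E(D^2) from the 3-dimensional model, one has R^2 - 6uR + 6v = (2 pi R^4 / 5) * 1/(3 L_0 + 3 M R + 4 pi R^2) > 0, and the functions g_1(u,v) = (2 pi R^2/5)(3R^2 - 12uR + 10v)/(R^2 - 6uR + 6v) and g_2(u,v) = -(4 pi R/5)(3R^2 - 16uR + 15v)/(R^2 - 6uR + 6v) satisfy g_1(u,v) = L_0 and g_2(u,v) = M. -/
open Real

/-- With u = E(D), v = E(D²) in the 3-dimensional model, R² - 6uR + 6v > 0 with the
stated closed form, and g₁(u,v) = L₀, g₂(u,v) = M. -/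
theorem stmt_12 (L0 M R : ℝ) (hL0 : 0 < L0) (hM : 0 ≤ M) (hR : 0 < R)
    (u v : ℝ)
    (hu : u = (3 * L0 * R + 4 * M * R ^ 2 + 6 * π * R ^ 3)
        / (6 * (L0 + M * R + 4 / 3 * π * R ^ 2)))
    (hv : v = (10 * L0 * R ^ 2 + 15 * M * R ^ 3 + 24 * π * R ^ 4)
        / (30 * (L0 + M * R + 4 / 3 * π * R ^ 2))) :
    R ^ 2 - 6 * u * R + 6 * v
        = (2 * π * R ^ 4 / 5) * (1 / (3 * L0 + 3 * M * R + 4 * π * R ^ 2))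
    ∧ 0 < R ^ 2 - 6 * u * R + 6 * v
    ∧ (2 * π * R ^ 2 / 5) * ((3 * R ^ 2 - 12 * u * R + 10 * v) / (R ^ 2 - 6 * u * R + 6 * v))
        = L0
    ∧ -(4 * π * R / 5) * ((3 * R ^ 2 - 16 * u * R + 15 * v) / (R ^ 2 - 6 * u * R + 6 * v))
        = M := by
  have hpi := Real.pi_pos
  have hD : 0 < L0 + M * R + 4 / 3 * π * R ^ 2 := by positivity
  have hD' : 0 < 3 * L0 + 3 * M * R + 4 * π * R ^ 2 := by positivity
  have h1 : R ^ 2 - 6 * u * R + 6 * v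
      = (2 * π * R ^ 4 / 5) * (1 / (3 * L0 + 3 * M * R + 4 * π * R ^ 2)) := by
    subst hu hv
    field_simp
    ring
  have h2 : 0 < R ^ 2 - 6 * u * R + 6 * v := by
    rw [h1]; positivity
  refine ⟨h1, h2, ?_, ?_⟩
  · rw [h1, hu, hv]
    field_simp
    ring
  · rw [h1, hu, hv]
    field_simp
    ring
end

section
/- Let X_1,...,X_n be i.i.d. random variables on an interval [a,b] with a < b, with a density f satisfying f(u) >= c > 0 for all u in [a,b]. Then E|1/(bar X - mu)| = infinity, where bar X is the sample mean and mu = E(X_1). -/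
open MeasureTheory Set ProbabilityTheory Finset
open scoped ENNReal

/-!
Write `∑ i, X i = X₀ + T` with `T = ∑_{i ≠ 0} X i` independent of `X₀`. For fixed `T = t` the
integrand is `n / |X₀ - p|` with `p = nμ - t`, and since the law of `X₀` dominates `c` times
Lebesgue measure on `[a, b]`, its expectation in `X₀` is infinite as soon as `p ∈ [a, b]`, by the
non-integrability of `1 / |y - p|` near `p`. The density also forces `a < μ < b`, so with positive
probability every `X i`, `i ≠ 0`, lies so close to `μ` that `p ∈ [a, b]`; Fubini concludes.
-/

theorem lintegral_Icc_ofReal_abs_inv_sub_eq_top {a b p : ℝ} (hab : a < b) (hp : p ∈ Icc a b) :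
    ∫⁻ y in Icc a b, ENNReal.ofReal |(y - p)⁻¹| = ⊤ := by
  by_contra h
  have hint : IntegrableOn (fun y => (y - p)⁻¹) (Icc a b) :=
    ⟨(measurable_id.sub_const p).inv.aestronglyMeasurable, by
      simpa [hasFiniteIntegral_iff_norm, lt_top_iff_ne_top] using h⟩
  have hii : IntervalIntegrable (fun y => (y - p)⁻¹) volume a b :=
    (intervalIntegrable_iff_integrableOn_Icc_of_le hab.le).2 hint
  rcases intervalIntegrable_sub_inv_iff.1 hii with h' | h'
  · exact hab.ne h'
  · exact h' (by rwa [uIcc_of_le hab.le])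

theorem smul_restrict_le_withDensity {α : Type*} [MeasurableSpace α] {μ : Measure α}
    {s : Set α} (hs : MeasurableSet s) {f : α → ℝ≥0∞} {c : ℝ≥0∞} (hf : ∀ x ∈ s, c ≤ f x) :
    c • μ.restrict s ≤ μ.withDensity f :=
  calc c • μ.restrict s = (μ.restrict s).withDensity fun _ => c := (withDensity_const c).symm
    _ ≤ (μ.restrict s).withDensity f := withDensity_mono ((ae_restrict_iff' hs).2 (ae_of_all _ hf))
    _ = (μ.withDensity f).restrict s := (restrict_withDensity hs f).symm
    _ ≤ μ.withDensity f := Measure.restrict_le_self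

theorem ae_withDensity_mem {α : Type*} [MeasurableSpace α] {μ : Measure α}
    {s : Set α} (hs : MeasurableSet s) {f : α → ℝ≥0∞} (hf : ∀ x ∉ s, f x = 0) :
    ∀ᵐ x ∂μ.withDensity f, x ∈ s := by
  change μ.withDensity f sᶜ = 0
  rw [withDensity_apply _ hs.compl, setLIntegral_congr_fun hs.compl (g := fun _ => 0) hf,
    lintegral_zero]

section LowerDensity

variable {a b : ℝ} {c : ℝ≥0∞} {ν : Measure ℝ}

theorem lintegral_ofReal_abs_inv_sub_eq_top (hab : a < b) (hc : c ≠ 0)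
    (hν : c • volume.restrict (Icc a b) ≤ ν) {p : ℝ} (hp : p ∈ Icc a b) :
    ∫⁻ y, ENNReal.ofReal |(y - p)⁻¹| ∂ν = ⊤ :=
  top_unique <| calc
    ⊤ = c * ∫⁻ y in Icc a b, ENNReal.ofReal |(y - p)⁻¹| := by
        rw [lintegral_Icc_ofReal_abs_inv_sub_eq_top hab hp, ENNReal.mul_top hc]
    _ = ∫⁻ y, ENNReal.ofReal |(y - p)⁻¹| ∂(c • volume.restrict (Icc a b)) := by
        rw [lintegral_smul_measure, smul_eq_mul]
    _ ≤ _ := lintegral_mono' hν le_rfl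

theorem lintegral_ofReal_abs_one_div_div_sub_eq_top (hab : a < b) (hc : c ≠ 0)
    (hν : c • volume.restrict (Icc a b) ≤ ν) {n t μ : ℝ} (hn : 1 ≤ n) (hp : n * μ - t ∈ Icc a b) :
    ∫⁻ y, ENNReal.ofReal |1 / ((y + t) / n - μ)| ∂ν = ⊤ := by
  refine top_unique <| (lintegral_ofReal_abs_inv_sub_eq_top hab hc hν hp).symm.trans_le <|
    lintegral_mono fun y => ENNReal.ofReal_le_ofReal ?_
  have hn0 : 0 < n := by linarith
  rw [show (y + t) / n - μ = (y - (n * μ - t)) / n by field_simp; ring, one_div_div,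
    div_eq_mul_inv, abs_mul, abs_of_pos hn0]
  exact le_mul_of_one_le_left (abs_nonneg _) hn

theorem measure_Icc_ne_zero_of_smul_restrict_le (hc : c ≠ 0)
    (hν : c • volume.restrict (Icc a b) ≤ ν) {u v : ℝ} (hau : a ≤ u) (huv : u < v)
    (hvb : v ≤ b) : ν (Icc u v) ≠ 0 := by
  refine ne_bot_of_le_ne_bot ?_ (hν (Icc u v))
  rw [Measure.smul_apply, Measure.restrict_apply measurableSet_Icc,
    inter_eq_self_of_subset_left (Icc_subset_Icc hau hvb), Real.volume_Icc, smul_eq_mul]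
  exact mul_ne_zero hc (by simpa using huv)

theorem integral_id_mem_Ioo [IsProbabilityMeasure ν] (hab : a < b) (hc : c ≠ 0)
    (hν : c • volume.restrict (Icc a b) ≤ ν) (hsupp : ∀ᵐ y ∂ν, y ∈ Icc a b) :
    ∫ y, y ∂ν ∈ Ioo a b := by
  have hint : Integrable (fun y => y) ν :=
    (integrable_const (max |a| |b|)).mono' aestronglyMeasurable_id <| by
      filter_upwards [hsupp] with y hy using abs_le_max_abs_abs hy.1 hy.2
  have hpos {g : ℝ → ℝ} (hg : Integrable g ν) (hg0 : ∀ y ∈ Icc a b, 0 ≤ g y)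
      {u v : ℝ} (hau : a ≤ u) (huv : u < v) (hvb : v ≤ b) (hgu : ∀ y ∈ Icc u v, g y ≠ 0) :
      0 < ∫ y, g y ∂ν := by
    rw [integral_pos_iff_support_of_nonneg_ae (hsupp.mono hg0) hg]
    exact (pos_iff_ne_zero.2 (measure_Icc_ne_zero_of_smul_restrict_le hc hν hau huv hvb)).trans_le
      (measure_mono hgu)
  have hleft : 0 < ∫ y, (y - a) ∂ν :=
    hpos (hint.sub (integrable_const a)) (fun y hy => sub_nonneg.2 hy.1)
      (u := (a + b) / 2) (by linarith) (by linarith) le_rfl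
      (fun y hy => sub_ne_zero.2 (by linarith [hy.1]))
  have hright : 0 < ∫ y, (b - y) ∂ν :=
    hpos ((integrable_const b).sub hint) (fun y hy => sub_nonneg.2 hy.2)
      (v := (a + b) / 2) le_rfl (by linarith) (by linarith)
      (fun y hy => sub_ne_zero.2 (by linarith [hy.2]))
  rw [integral_sub hint (integrable_const a)] at hleft
  rw [integral_sub (integrable_const b) hint] at hright
  simp only [integral_const, probReal_univ, smul_eq_mul, one_mul] at hleft hright
  exact ⟨by linarith, by linarith⟩

end LowerDensity

section Independence

variable {Ω : Type*} [MeasurableSpace Ω] {P : Measure Ω}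

theorem measure_sum_mem_Icc_ne_zero {ι : Type*} {X : ι → Ω → ℝ} (hindep : iIndepFun X P)
    (s : Finset ι) {u v : ℝ} (hX : ∀ i ∈ s, P (X i ⁻¹' Icc u v) ≠ 0) :
    P ((∑ i ∈ s, X i) ⁻¹' Icc (#s * u) (#s * v)) ≠ 0 := by
  have hbox : (⋂ i ∈ s, X i ⁻¹' Icc u v) ⊆ (∑ i ∈ s, X i) ⁻¹' Icc (#s * u) (#s * v) := by
    intro ω hω
    simp only [mem_iInter] at hω
    simp only [Set.mem_preimage, Finset.sum_apply, Set.mem_Icc, ← nsmul_eq_mul]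
    exact ⟨card_nsmul_le_sum _ _ _ fun i hi => (hω i hi).1,
      sum_le_card_nsmul _ _ _ fun i hi => (hω i hi).2⟩
  intro h
  obtain ⟨i, hi, hzero⟩ := prod_eq_zero_iff.1 <|
    (hindep.meas_biInter fun i _ => ⟨_, measurableSet_Icc, rfl⟩).symm.trans
      (measure_mono_null hbox h)
  exact hX i hi hzero

theorem measure_sum_mem_Icc_ne_zero_of_map_eq {ι : Type*} {X : ι → Ω → ℝ}
    (hindep : iIndepFun X P) (hmeas : ∀ i, Measurable (X i)) {a b : ℝ} {c : ℝ≥0∞} (hc : c ≠ 0)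
    {ν : Measure ℝ} (hν : c • volume.restrict (Icc a b) ≤ ν) (hlaw : ∀ i, P.map (X i) = ν)
    {μ : ℝ} (hμ : μ ∈ Ioo a b) (s : Finset ι) :
    P ((∑ i ∈ s, X i) ⁻¹' Icc (#s * μ - (b - μ)) (#s * μ + (μ - a))) ≠ 0 := by
  set δ := min (μ - a) (b - μ)
  have hδa : δ ≤ μ - a := min_le_left _ _
  have hδb : δ ≤ b - μ := min_le_right _ _
  set η := δ / (#s + 1)
  have hη : 0 < η := div_pos (lt_min (by linarith [hμ.1]) (by linarith [hμ.2])) (by positivity)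
  have hηδ : (#s + 1) * η = δ := mul_div_cancel₀ _ (by positivity)
  refine fun h => measure_sum_mem_Icc_ne_zero hindep s (u := μ - η) (v := μ + η) (fun i _ => ?_)
    (measure_mono_null (preimage_mono (Icc_subset_Icc (by nlinarith) (by nlinarith))) h)
  rw [← Measure.map_apply (hmeas i) measurableSet_Icc, hlaw i]
  exact measure_Icc_ne_zero_of_smul_restrict_le hc hν (by nlinarith) (by linarith) (by nlinarith)

theorem lintegral_comp_add_eq_top_of_indepFun [IsFiniteMeasure P] {T Y : Ω → ℝ}
    (hT : Measurable T) (hY : Measurable Y) (hind : IndepFun T Y P) {g : ℝ → ℝ≥0∞}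
    (hg : Measurable g) {J : Set ℝ} (hJ : MeasurableSet J) (hTJ : P (T ⁻¹' J) ≠ 0)
    (hinner : ∀ t ∈ J, ∫⁻ y, g (y + t) ∂P.map Y = ⊤) :
    ∫⁻ ω, g (Y ω + T ω) ∂P = ⊤ := by
  have hF : Measurable fun z : ℝ × ℝ => g (z.2 + z.1) := hg.comp (measurable_snd.add measurable_fst)
  have hfubini : ∫⁻ ω, g (Y ω + T ω) ∂P = ∫⁻ t, ∫⁻ y, g (y + t) ∂P.map Y ∂P.map T := by
    rw [← lintegral_map hF (hT.prodMk hY),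
      (indepFun_iff_map_prod_eq_prod_map_map hT.aemeasurable hY.aemeasurable).1 hind,
      lintegral_prod _ hF.aemeasurable]
  refine hfubini ▸ top_unique ?_
  calc ⊤ = ∫⁻ t in J, ⊤ ∂P.map T := by
        rw [setLIntegral_const, Measure.map_apply hT hJ, ENNReal.top_mul hTJ]
    _ = ∫⁻ t in J, ∫⁻ y, g (y + t) ∂P.map Y ∂P.map T :=
        (setLIntegral_congr_fun hJ fun t ht => (hinner t ht).symm)
    _ ≤ _ := setLIntegral_le_lintegral _ _

end Independence

/-- If X₁,…,Xₙ are i.i.d. on [a,b] with a density bounded below by c > 0 on [a,b],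
then E|1/(X̄ - μ)| = ∞, where X̄ is the sample mean and μ = E(X₁). -/
theorem stmt_13 {Ω : Type*} [MeasurableSpace Ω] (P : Measure Ω) [IsProbabilityMeasure P]
    (n : ℕ) (hn : 1 ≤ n) (a b c : ℝ) (hab : a < b) (hc : 0 < c)
    (f : ℝ → ℝ) (hf : ∀ u ∈ Icc a b, c ≤ f u) (hf0 : ∀ u ∉ Icc a b, f u = 0)
    (X : Fin n → Ω → ℝ) (hmeas : ∀ i, Measurable (X i))
    (hindep : iIndepFun X P)
    (hlaw : ∀ i, Measure.map (X i) P
      = volume.withDensity fun u => ENNReal.ofReal (f u))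
    (μ : ℝ) (hμ : μ = ∫ ω, X ⟨0, hn⟩ ω ∂P) :
    ∫⁻ ω, ENNReal.ofReal |1 / ((∑ i, X i ω) / n - μ)| ∂P = ⊤ := by
  set ν := volume.withDensity fun u => ENNReal.ofReal (f u)
  set i₀ : Fin n := ⟨0, hn⟩
  have hc' : ENNReal.ofReal c ≠ 0 := (ENNReal.ofReal_pos.2 hc).ne'
  have hν : ENNReal.ofReal c • volume.restrict (Icc a b) ≤ ν :=
    smul_restrict_le_withDensity measurableSet_Icc fun u hu => ENNReal.ofReal_le_ofReal (hf u hu)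
  have hsupp : ∀ᵐ u ∂ν, u ∈ Icc a b :=
    ae_withDensity_mem measurableSet_Icc fun u hu => by simp [hf0 u hu]
  have : IsProbabilityMeasure ν :=
    hlaw i₀ ▸ Measure.isProbabilityMeasure_map (hmeas i₀).aemeasurable
  have hμ_mem : μ ∈ Ioo a b := by
    have hμν : μ = ∫ u, u ∂ν :=
      hμ.trans (hlaw i₀ ▸ integral_map (hmeas i₀).aemeasurable aestronglyMeasurable_id).symm
    exact hμν ▸ integral_id_mem_Ioo hab hc' hν hsupp
  set s := univ.erase i₀
  have hcard : (#s : ℝ) = n - 1 := by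
    rw [card_erase_of_mem (mem_univ _), card_univ, Fintype.card_fin, Nat.cast_sub hn, Nat.cast_one]
  have hsum (ω : Ω) : ∑ i, X i ω = X i₀ ω + (∑ i ∈ s, X i) ω := by
    rw [Finset.sum_apply]; exact (add_sum_erase _ _ (mem_univ i₀)).symm
  simp_rw [hsum]
  refine lintegral_comp_add_eq_top_of_indepFun (T := ∑ i ∈ s, X i) (by fun_prop)
    (hmeas i₀) (hindep.indepFun_finsetSum_of_notMem hmeas (notMem_erase i₀ univ))
    (g := fun z => ENNReal.ofReal |1 / (z / n - μ)|) (by fun_prop) measurableSet_Icc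
    (measure_sum_mem_Icc_ne_zero_of_map_eq hindep hmeas hc' hν hlaw hμ_mem s)
    fun t ⟨ht₁, ht₂⟩ => ?_
  rw [hcard] at ht₁ ht₂
  rw [hlaw i₀]
  exact lintegral_ofReal_abs_one_div_div_sub_eq_top hab hc' hν (by exact_mod_cast hn)
    ⟨by linarith, by linarith⟩
end

section
/- If D_1,...,D_n are i.i.d. with density f(r) = (L_0 + 2 pi r)/(L_0 R + pi R^2) on [0,R], then the moment estimator tilde L_0 = (2 pi R/3)(2R - 3 bar D)/(2 bar D - R) satisfies E|tilde L_0| = infinity. -/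
open Real MeasureTheory Set ProbabilityTheory
open scoped ENNReal

/-!
Split `n * D̄ = S + X` with `X = D₁` and `S` the sum of the others; they are independent, so
`E|L̃₀| = ∫ (∫ |L̃₀((s + x)/n)| f(x) dx) dP_S(s)`. The estimator has a simple pole at
`D̄ = R/2`, i.e. at `x = nR/2 - s`. Whenever `|s - (n-1)R/2| ≤ R/4` this pole lies in
`[R/4, 3R/4]`, where `f ≥ L₀/(L₀R + πR²) > 0`, so the inner integral dominates a multiple of
the divergent `∫ dx / (x - nR/2 + s)` just to the right of the pole. Such `s` occur with
positive probability, since each summand of `S` lands in a small interval around `R/2` with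
positive probability.
-/

lemma lintegral_ofReal_inv_sub_Ioo_eq_top (c : ℝ) {ε : ℝ} (hε : 0 < ε) :
    ∫⁻ x in Ioo c (c + ε), ENNReal.ofReal (x - c)⁻¹ = ∞ := by
  by_contra h
  have hint : IntegrableOn (fun x => (x - c)⁻¹) (Ioo c (c + ε)) := by
    refine ⟨by fun_prop, ?_⟩
    rw [hasFiniteIntegral_iff_ofReal]
    · exact lt_top_iff_ne_top.2 h
    · filter_upwards [ae_restrict_mem measurableSet_Ioo] with x hx
      exact inv_nonneg.2 (sub_nonneg.2 hx.1.le)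
  have := (intervalIntegrable_iff_integrableOn_Ioo_of_le (by linarith)).2 hint
  simp only [intervalIntegrable_sub_inv_iff, left_eq_add, hε.ne',
    uIcc_of_le (by linarith : c ≤ c + ε), mem_Icc, le_refl, le_add_iff_nonneg_right, true_and,
    not_le, false_or] at this
  linarith

lemma lintegral_eq_top_of_inv_sub_le {g : ℝ → ℝ≥0∞} {c ε : ℝ} {K : ℝ≥0∞} (hε : 0 < ε)
    (hK : K ≠ 0) (hg : ∀ x ∈ Ioo c (c + ε), K * ENNReal.ofReal (x - c)⁻¹ ≤ g x) :
    ∫⁻ x, g x = ∞ := by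
  refine eq_top_iff.2 ?_
  calc ∞ = K * ∫⁻ x in Ioo c (c + ε), ENNReal.ofReal (x - c)⁻¹ := by
        rw [lintegral_ofReal_inv_sub_Ioo_eq_top c hε, ENNReal.mul_top hK]
    _ = ∫⁻ x in Ioo c (c + ε), K * ENNReal.ofReal (x - c)⁻¹ :=
        (lintegral_const_mul K (by fun_prop)).symm
    _ ≤ ∫⁻ x in Ioo c (c + ε), g x := setLIntegral_mono' measurableSet_Ioo hg
    _ ≤ ∫⁻ x, g x := setLIntegral_le_lintegral _ _

theorem ProbabilityTheory.IndepFun.lintegral_comp_eq_lintegral_lintegral {Ω α β : Type*}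
    [MeasurableSpace Ω] [MeasurableSpace α] [MeasurableSpace β] {P : Measure Ω}
    [IsFiniteMeasure P] {X : Ω → α} {Y : Ω → β} (hXY : IndepFun X Y P) (hX : Measurable X)
    (hY : Measurable Y) {G : α × β → ℝ≥0∞} (hG : Measurable G) :
    ∫⁻ ω, G (X ω, Y ω) ∂P = ∫⁻ x, ∫⁻ y, G (x, y) ∂(P.map Y) ∂(P.map X) := by
  rw [← lintegral_prod G hG.aemeasurable, ← hXY.map_prod_eq_prod_map_map hX.aemeasurable
    hY.aemeasurable, lintegral_map hG (hX.prodMk hY)]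

theorem ProbabilityTheory.iIndepFun.measure_sum_mem_closedBall_ne_zero {Ω ι : Type*}
    [MeasurableSpace Ω] {P : Measure Ω} {D : ι → Ω → ℝ}
    (hD : iIndepFun D P) (t : Finset ι) {b δ : ℝ}
    (h : ∀ j ∈ t, P (D j ⁻¹' Metric.closedBall b δ) ≠ 0) :
    P {ω | ∑ j ∈ t, D j ω ∈ Metric.closedBall (t.card * b) (t.card * δ)} ≠ 0 := by
  have hsub : (⋂ j ∈ t, D j ⁻¹' Metric.closedBall b δ) ⊆
      {ω | ∑ j ∈ t, D j ω ∈ Metric.closedBall (t.card * b) (t.card * δ)} := by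
    intro ω hω
    simp only [mem_iInter, mem_preimage, Metric.mem_closedBall, Real.dist_eq] at hω
    simp only [mem_ofPred_eq, Metric.mem_closedBall, Real.dist_eq]
    calc |∑ j ∈ t, D j ω - t.card * b| = |∑ j ∈ t, (D j ω - b)| := by
          rw [Finset.sum_sub_distrib, Finset.sum_const, nsmul_eq_mul]
      _ ≤ ∑ j ∈ t, |D j ω - b| := Finset.abs_sum_le_sum_abs _ _
      _ ≤ t.card * δ := by
          simpa using Finset.sum_le_card_nsmul t _ δ hω
  refine fun h0 => ?_
  have := measure_mono_null hsub h0
  rw [hD.measure_inter_preimage_eq_mul t (fun _ _ => measurableSet_closedBall),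
    Finset.prod_eq_zero_iff] at this
  obtain ⟨j, hj, hj0⟩ := this
  exact h j hj hj0

noncomputable def radialDensity (R L0 r : ℝ) : ℝ≥0∞ :=
  ENNReal.ofReal ((Icc (0:ℝ) R).indicator (fun t => (L0 + 2 * π * t) / (L0 * R + π * R ^ 2)) r)

noncomputable def momentEstimator (R d : ℝ) : ℝ := 2 * π * R / 3 * ((2 * R - 3 * d) / (2 * d - R))

section radialDensity

variable {R L0 : ℝ}

@[fun_prop]
lemma measurable_radialDensity : Measurable (radialDensity R L0) :=
  (Measurable.indicator (by fun_prop) measurableSet_Icc).ennreal_ofReal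

lemma radialDensity_ge (hR : 0 < R) (hL0 : 0 < L0) {r : ℝ} (hr : r ∈ Icc 0 R) :
    ENNReal.ofReal (L0 / (L0 * R + π * R ^ 2)) ≤ radialDensity R L0 r := by
  rw [radialDensity, indicator_of_mem hr]
  gcongr
  nlinarith [pi_pos, hr.1]

lemma withDensity_radialDensity_ne_zero (hR : 0 < R) (hL0 : 0 < L0) {J : Set ℝ}
    (hJ : J ⊆ Icc 0 R) (hJ0 : volume J ≠ 0) : volume.withDensity (radialDensity R L0) J ≠ 0 := by
  rw [Ne, withDensity_apply_eq_zero measurable_radialDensity]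
  convert hJ0 using 2
  congr 1
  refine inter_eq_right.2 fun r hr => (lt_of_lt_of_le ?_ (radialDensity_ge hR hL0 (hJ hr))).ne'
  simp only [ENNReal.ofReal_pos]
  positivity

end radialDensity

@[fun_prop]
lemma measurable_momentEstimator (R : ℝ) : Measurable (momentEstimator R) := by
  unfold momentEstimator
  fun_prop

lemma inv_sub_le_abs_momentEstimator {R d : ℝ} (hR : 0 < R) (hd : R / 2 < d)
    (hd' : d ≤ 7 * R / 12) : π * R ^ 2 / 12 * (d - R / 2)⁻¹ ≤ |momentEstimator R d| := by
  have hu : 0 < d - R / 2 := by linarith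
  have hnum : R / 4 ≤ 2 * R - 3 * d := by linarith
  rw [momentEstimator, abs_of_nonneg (by
    apply mul_nonneg (by positivity) (div_nonneg (by linarith) (by linarith)))]
  have hrhs : 2 * π * R / 3 * ((2 * R - 3 * d) / (2 * d - R)) * (d - R / 2)
      = π * R * (2 * R - 3 * d) / 3 := by
    have : 2 * d - R ≠ 0 := by linarith
    field_simp
  rw [← div_eq_mul_inv, div_le_iff₀ hu, hrhs]
  nlinarith [mul_le_mul_of_nonneg_left hnum (by positivity : 0 ≤ π * R)]

/-- The pole `x = N * R / 2 - s` of the integrand lies in `[R/4, 3R/4]`, where the density is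
bounded below, and the estimator blows up like `(x - N * R / 2 + s)⁻¹` there. -/
lemma lintegral_abs_momentEstimator_eq_top {R L0 N s : ℝ} (hR : 0 < R) (hL0 : 0 < L0)
    (hN : 1 ≤ N) (hs : s ∈ Metric.closedBall ((N - 1) * (R / 2)) (R / 4)) :
    ∫⁻ x, ENNReal.ofReal |momentEstimator R ((s + x) / N)|
      ∂(volume.withDensity (radialDensity R L0)) = ∞ := by
  rw [Metric.mem_closedBall, Real.dist_eq, abs_le] at hs
  set c := N * R / 2 - s with hc
  rw [lintegral_withDensity_eq_lintegral_mul _ measurable_radialDensity (by fun_prop)]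
  refine lintegral_eq_top_of_inv_sub_le (c := c) (ε := R / 12)
    (K := ENNReal.ofReal (L0 / (L0 * R + π * R ^ 2)) * ENNReal.ofReal (π * R ^ 2 / 12 * N))
    (by positivity) ?_ fun x hx => ?_
  · simp only [ne_eq, mul_eq_zero, ENNReal.ofReal_eq_zero, not_or, not_le]
    constructor <;> positivity
  have hxc : 0 < x - c := sub_pos.2 hx.1
  have hd : (s + x) / N - R / 2 = (x - c) / N := by
    field_simp
    ring
  have hdist : (s + x) / N - R / 2 ≤ R / 12 := by
    rw [hd, div_le_iff₀ (by linarith)]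
    nlinarith [hx.2]
  have hd0 : R / 2 < (s + x) / N := by
    have := div_pos hxc (by linarith : (0:ℝ) < N)
    linarith
  have hest := inv_sub_le_abs_momentEstimator hR hd0 (by linarith)
  rw [hd, inv_div] at hest
  rw [mul_assoc, ← ENNReal.ofReal_mul (by positivity)]
  refine mul_le_mul' (radialDensity_ge hR hL0 ⟨by linarith, by linarith [hx.2, hs.1]⟩)
    (ENNReal.ofReal_le_ofReal ?_)
  calc π * R ^ 2 / 12 * N * (x - c)⁻¹ = π * R ^ 2 / 12 * (N / (x - c)) := by ring
    _ ≤ _ := hest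

lemma measure_sum_mem_closedBall_ne_zero_of_radialDensity {Ω ι : Type*} [MeasurableSpace Ω]
    {P : Measure Ω} {R L0 : ℝ} (hR : 0 < R) (hL0 : 0 < L0) {D : ι → Ω → ℝ}
    (hmeas : ∀ i, Measurable (D i)) (hD : iIndepFun D P)
    (hlaw : ∀ i, P.map (D i) = volume.withDensity (radialDensity R L0)) (t : Finset ι) :
    P {ω | ∑ j ∈ t, D j ω ∈ Metric.closedBall (t.card * (R / 2)) (R / 4)} ≠ 0 := by
  set δ := R / (4 * (t.card + 1))
  have hδ : t.card * δ ≤ R / 4 := by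
    rw [mul_div_assoc', div_le_div_iff₀ (by positivity) (by norm_num)]
    nlinarith
  have hδR : δ ≤ R / 4 := div_le_div_of_nonneg_left hR.le (by norm_num) (by linarith)
  refine fun h0 => hD.measure_sum_mem_closedBall_ne_zero t (b := R / 2) (δ := δ)
    (fun j _ => ?_) (measure_mono_null (fun ω hω => ?_) h0)
  · rw [← Measure.map_apply (hmeas j) measurableSet_closedBall, hlaw]
    refine withDensity_radialDensity_ne_zero hR hL0 ?_ ?_
    · rw [Real.closedBall_eq_Icc]
      exact Icc_subset_Icc (by linarith) (by linarith)
    · rw [Real.volume_closedBall]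
      simp only [ne_eq, ENNReal.ofReal_eq_zero, not_le]
      positivity
  · exact Metric.closedBall_subset_closedBall hδ hω

/-- If D₁,…,Dₙ are i.i.d. with density (L₀+2πr)/(L₀R+πR²) on [0,R], then the moment
estimator L̃₀ = (2πR/3)(2R - 3D̄)/(2D̄ - R) satisfies E|L̃₀| = ∞. -/
theorem stmt_15 {Ω : Type*} [MeasurableSpace Ω] (P : Measure Ω) [IsProbabilityMeasure P]
    (n : ℕ) (hn : 1 ≤ n) (R L0 : ℝ) (hR : 0 < R) (hL0 : 0 < L0)
    (D : Fin n → Ω → ℝ) (hmeas : ∀ i, Measurable (D i))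
    (hindep : iIndepFun D P)
    (hlaw : ∀ i, Measure.map (D i) P = volume.withDensity fun r =>
      ENNReal.ofReal ((Icc (0:ℝ) R).indicator
        (fun t => (L0 + 2 * π * t) / (L0 * R + π * R ^ 2)) r))
    (barD : Ω → ℝ) (hbarD : ∀ ω, barD ω = (∑ i, D i ω) / n)
    (tildeL0 : Ω → ℝ)
    (htilde : ∀ ω, tildeL0 ω
      = (2 * π * R / 3) * ((2 * R - 3 * barD ω) / (2 * barD ω - R))) :
    ∫⁻ ω, ENNReal.ofReal |tildeL0 ω| ∂P = ⊤ := by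
  classical
  have hlaw' : ∀ i, P.map (D i) = volume.withDensity (radialDensity R L0) := hlaw
  set i₀ : Fin n := ⟨0, hn⟩
  set t := Finset.univ.erase i₀
  set S : Ω → ℝ := fun ω => ∑ j ∈ t, D j ω
  have hS : Measurable S := Finset.measurable_sum t fun j _ => hmeas j
  have htilde' : ∀ ω, tildeL0 ω = momentEstimator R ((S ω + D i₀ ω) / n) := fun ω => by
    rw [htilde, hbarD, ← Finset.sum_erase_add _ _ (Finset.mem_univ i₀)]
    rfl
  have hSX : IndepFun S (D i₀) P := by
    convert hindep.indepFun_finsetSum_of_notMem hmeas (Finset.notMem_erase i₀ Finset.univ) using 1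
    ext ω
    exact (Finset.sum_apply ω t D).symm
  have hcard : (t.card : ℝ) = n - 1 := by
    rw [Finset.card_erase_of_mem (Finset.mem_univ _), Finset.card_univ, Fintype.card_fin,
      Nat.cast_sub hn, Nat.cast_one]
  have hSball : P.map S (Metric.closedBall ((n - 1) * (R / 2)) (R / 4)) ≠ 0 := by
    rw [Measure.map_apply hS measurableSet_closedBall, ← hcard]
    exact measure_sum_mem_closedBall_ne_zero_of_radialDensity hR hL0 hmeas hindep hlaw' t
  have hinner : Measurable fun s => ∫⁻ x, ENNReal.ofReal |momentEstimator R ((s + x) / n)|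
      ∂(volume.withDensity (radialDensity R L0)) :=
    Measurable.lintegral_prod_right' (f := fun p : ℝ × ℝ =>
      ENNReal.ofReal |momentEstimator R ((p.1 + p.2) / n)|) (by fun_prop)
  simp only [htilde']
  rw [hSX.lintegral_comp_eq_lintegral_lintegral (G := fun p : ℝ × ℝ =>
      ENNReal.ofReal |momentEstimator R ((p.1 + p.2) / n)|) hS (hmeas i₀) (by fun_prop), hlaw']
  exact lintegral_eq_top_of_measure_eq_top_ne_zero hinner.aemeasurable
    fun h => hSball (measure_mono_null (fun s hs => lintegral_abs_momentEstimator_eq_top hR hL0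
      (by exact_mod_cast hn) hs) h)
end

section
/- Let S = B((0,0,1),1) union B((0,0,-1),1) in R^3 (two unit balls touching at the origin). Then for all r >= 0, the volume of the r-parallel set is mu(B(S,r)) = (4/3) pi r^3 + 6 pi r^2 + 8 pi r + (8/3) pi; in particular the parallel volume is a polynomial in r of degree 3 with leading coefficient 4 pi/3 for all r >= 0. -/
open MeasureTheory Metric Real

/-! Thickening a unit ball by `r` gives the concentric ball of radius `R = r + 1`, so the parallel
set is the union of the balls of radius `R` centred at `±e₃`. This union is the solid of revolution
about the third axis whose section at height `z` is the disc of squared radius `R² - (|z| - 1)²`,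
so by Cavalieri's principle its volume is `∫ π (R² - (|z| - 1)²) dz` over `|z| ≤ R + 1`, which is
computed separately on each side of `0`. -/

theorem volume_setOf_sq_add_sq_le (t : ℝ) :
    volume {y : Fin 2 → ℝ | y 0 ^ 2 + y 1 ^ 2 ≤ t} = ENNReal.ofReal (π * t) := by
  rcases lt_or_ge t 0 with ht | ht
  · have hempty : {y : Fin 2 → ℝ | y 0 ^ 2 + y 1 ^ 2 ≤ t} = ∅ := by
      ext y
      simp only [Set.mem_ofPred_eq, Set.mem_empty_iff_false, iff_false, not_le]
      nlinarith [sq_nonneg (y 0), sq_nonneg (y 1)]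
    rw [hempty, measure_empty, ENNReal.ofReal_of_nonpos (by nlinarith [pi_pos])]
  · have hball : {y : Fin 2 → ℝ | y 0 ^ 2 + y 1 ^ 2 ≤ t}
        = WithLp.toLp 2 ⁻¹' closedBall (0 : EuclideanSpace ℝ (Fin 2)) √t := by
      ext y
      simp [EuclideanSpace.norm_eq, Fin.sum_univ_two, Real.sqrt_le_sqrt_iff ht]
    rw [hball, (PiLp.volume_preserving_toLp (Fin 2)).measure_preimage
      measurableSet_closedBall.nullMeasurableSet, EuclideanSpace.volume_closedBall_fin_two,
      ← ENNReal.ofReal_pow (sqrt_nonneg t), sq_sqrt ht, ← ENNReal.ofReal_mul ht, mul_comm]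

theorem volume_solidOfRevolution {g : ℝ → ℝ} (hg : Measurable g) :
    volume {x : EuclideanSpace ℝ (Fin 3) | x 0 ^ 2 + x 1 ^ 2 ≤ g (x 2)}
      = ∫⁻ z, ENNReal.ofReal (π * g z) := by
  set B : Set (ℝ × (Fin 2 → ℝ)) := {p | p.2 0 ^ 2 + p.2 1 ^ 2 ≤ g p.1}
  have hB : MeasurableSet B := measurableSet_le (by fun_prop) (by fun_prop)
  have hpre : {x : EuclideanSpace ℝ (Fin 3) | x 0 ^ 2 + x 1 ^ 2 ≤ g (x 2)}
      = WithLp.ofLp ⁻¹' (MeasurableEquiv.piFinSuccAbove (fun _ : Fin 3 => ℝ) 2 ⁻¹' B) := rfl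
  rw [hpre, (PiLp.volume_preserving_ofLp (Fin 3)).measure_preimage
      (hB.preimage (MeasurableEquiv.measurable _)).nullMeasurableSet,
    (volume_preserving_piFinSuccAbove (fun _ : Fin 3 => ℝ) 2).measure_preimage
      hB.nullMeasurableSet, Measure.volume_eq_prod, Measure.prod_apply hB]
  exact lintegral_congr fun z => volume_setOf_sq_add_sq_le (g z)

theorem lintegral_ofReal_eq_intervalIntegral {f : ℝ → ℝ} {a b : ℝ} (hab : a ≤ b)
    (hf : ContinuousOn f (Set.Icc a b)) (hf_nonneg : ∀ x ∈ Set.Icc a b, 0 ≤ f x)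
    (hf_nonpos : ∀ x ∉ Set.Icc a b, f x ≤ 0) :
    ∫⁻ x, ENNReal.ofReal (f x) = ENNReal.ofReal (∫ x in a..b, f x) := by
  have hsupp : (fun x => ENNReal.ofReal (f x)).support ⊆ Set.Icc a b := fun x hx => by
    by_contra h
    exact hx (ENNReal.ofReal_of_nonpos (hf_nonpos x h))
  rw [← setLIntegral_eq_of_support_subset hsupp, intervalIntegral.integral_of_le hab,
    ← integral_Icc_eq_integral_Ioc, ofReal_integral_eq_lintegral_ofReal hf.integrableOn_Icc
      ((ae_restrict_iff' measurableSet_Icc).2 (Filter.Eventually.of_forall hf_nonneg))]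

theorem hasDerivAt_ballSectionArea_primitive (R s z : ℝ) :
    HasDerivAt (fun z => π * (R ^ 2 * z - (z - s) ^ 3 / 3)) (π * (R ^ 2 - (z - s) ^ 2)) z := by
  refine ((((hasDerivAt_id' z).const_mul (R ^ 2)).fun_sub
    ((((hasDerivAt_id' z).sub_const s).fun_pow 3).div_const 3)).const_mul π).congr_deriv ?_
  ring

theorem integral_twoBallsSectionArea {R : ℝ} (hR : 0 ≤ R) :
    ∫ z in -(R + 1)..R + 1, π * (R ^ 2 - (|z| - 1) ^ 2)
      = π * (4 / 3 * R ^ 3 + 2 * R ^ 2 - 2 / 3) := by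
  have hint : ∀ a b : ℝ, IntervalIntegrable (fun z => π * (R ^ 2 - (|z| - 1) ^ 2)) volume a b :=
    fun a b => (by fun_prop : Continuous fun z : ℝ => π * (R ^ 2 - (|z| - 1) ^ 2))
      |>.intervalIntegrable a b
  have hneg : ∀ z ∈ Set.uIcc (-(R + 1)) 0,
      HasDerivAt (fun z => π * (R ^ 2 * z - (z - -1) ^ 3 / 3)) (π * (R ^ 2 - (|z| - 1) ^ 2)) z := by
    intro z hz
    rw [Set.uIcc_of_le (by linarith)] at hz
    convert hasDerivAt_ballSectionArea_primitive R (-1) z using 2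
    rw [abs_of_nonpos hz.2]; ring
  have hpos : ∀ z ∈ Set.uIcc 0 (R + 1),
      HasDerivAt (fun z => π * (R ^ 2 * z - (z - 1) ^ 3 / 3)) (π * (R ^ 2 - (|z| - 1) ^ 2)) z := by
    intro z hz
    rw [Set.uIcc_of_le (by linarith)] at hz
    rw [abs_of_nonneg hz.1]
    exact hasDerivAt_ballSectionArea_primitive R 1 z
  rw [← intervalIntegral.integral_add_adjacent_intervals (hint _ 0) (hint 0 _),
    intervalIntegral.integral_eq_sub_of_hasDerivAt hneg (hint _ _),
    intervalIntegral.integral_eq_sub_of_hasDerivAt hpos (hint _ _)]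
  ring

theorem mem_closedBall_iff_sum_sq {x y : EuclideanSpace ℝ (Fin 3)} {R : ℝ} (hR : 0 ≤ R) :
    x ∈ closedBall y R ↔ (x 0 - y 0) ^ 2 + (x 1 - y 1) ^ 2 + (x 2 - y 2) ^ 2 ≤ R ^ 2 := by
  rw [mem_closedBall, EuclideanSpace.dist_eq, sqrt_le_left hR, Fin.sum_univ_three]
  simp only [Real.dist_eq, sq_abs]

theorem closedBall_union_closedBall_neg_eq {R : ℝ} (hR : 0 ≤ R) :
    closedBall ((EuclideanSpace.equiv (Fin 3) ℝ).symm ![0, 0, 1]) R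
        ∪ closedBall (-(EuclideanSpace.equiv (Fin 3) ℝ).symm ![0, 0, 1]) R
      = {x : EuclideanSpace ℝ (Fin 3) | x 0 ^ 2 + x 1 ^ 2 ≤ R ^ 2 - (|x 2| - 1) ^ 2} := by
  ext x
  simp only [Set.mem_union, mem_closedBall_iff_sum_sq hR, Set.mem_ofPred_eq]
  change (x 0 - 0) ^ 2 + (x 1 - 0) ^ 2 + (x 2 - 1) ^ 2 ≤ R ^ 2
    ∨ (x 0 - -0) ^ 2 + (x 1 - -0) ^ 2 + (x 2 - -1) ^ 2 ≤ R ^ 2 ↔ _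
  rcases le_total 0 (x 2) with hx | hx
  · rw [abs_of_nonneg hx]
    constructor
    · rintro (h | h) <;> nlinarith
    · intro h; left; nlinarith
  · rw [abs_of_nonpos hx]
    constructor
    · rintro (h | h) <;> nlinarith
    · intro h; right; nlinarith

theorem volume_closedBall_union_closedBall_neg {R : ℝ} (hR : 1 ≤ R) :
    volume (closedBall ((EuclideanSpace.equiv (Fin 3) ℝ).symm ![0, 0, 1]) R
        ∪ closedBall (-(EuclideanSpace.equiv (Fin 3) ℝ).symm ![0, 0, 1]) R)
      = ENNReal.ofReal (π * (4 / 3 * R ^ 3 + 2 * R ^ 2 - 2 / 3)) := by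
  rw [closedBall_union_closedBall_neg_eq (by linarith),
    volume_solidOfRevolution (g := fun z => R ^ 2 - (|z| - 1) ^ 2) (by fun_prop),
    lintegral_ofReal_eq_intervalIntegral (a := -(R + 1)) (b := R + 1) (by linarith)
      (by fun_prop) ?nonneg ?nonpos, integral_twoBallsSectionArea (by linarith)]
  case nonneg =>
    intro z hz
    have hz' : |z| ≤ R + 1 := abs_le.2 hz
    have : (|z| - 1) ^ 2 ≤ R ^ 2 := sq_le_sq' (by linarith [abs_nonneg z]) (by linarith)
    exact mul_nonneg pi_pos.le (by linarith)
  case nonpos =>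
    intro z hz
    have hz' : R + 1 < |z| := not_le.1 fun h => hz (abs_le.1 h)
    have : R ^ 2 ≤ (|z| - 1) ^ 2 := sq_le_sq' (by linarith) (by linarith)
    exact mul_nonpos_of_nonneg_of_nonpos pi_pos.le (by linarith)

/-- For S the union of the two unit balls in ℝ³ centered at (0,0,1) and (0,0,-1),
the parallel volume is μ(B(S,r)) = (4/3)πr³ + 6πr² + 8πr + (8/3)π for all r ≥ 0. -/
theorem stmt_18 (c : EuclideanSpace ℝ (Fin 3))
    (hc : c = (EuclideanSpace.equiv (Fin 3) ℝ).symm ![0, 0, 1])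
    (S : Set (EuclideanSpace ℝ (Fin 3)))
    (hS : S = closedBall c 1 ∪ closedBall (-c) 1) :
    ∀ r : ℝ, 0 ≤ r →
      (volume (cthickening r S)).toReal
        = 4 / 3 * π * r ^ 3 + 6 * π * r ^ 2 + 8 * π * r + 8 / 3 * π := by
  intro r hr
  subst hc hS
  rw [cthickening_union, cthickening_closedBall hr zero_le_one,
    cthickening_closedBall hr zero_le_one, volume_closedBall_union_closedBall_neg (by linarith),
    ENNReal.toReal_ofReal (mul_nonneg pi_pos.le (by nlinarith))]
  ring
end
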